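/- Let R be a commutative unital ring, I an ideal of R, and M an injective R-module. Then M is I-torsion (i.e., Γ_I(M) = M) if and only if D_I(M) = 0; and M is I-torsionfree (i.e., Γ_I(M) = 0) if and only if the canonical map M → D_I(M) is an isomorphism. -/
import Mathlib


/-!
STATEMENT 6: Let `R` be a commutative unital ring, `I` an ideal of `R`, and `M` an injective
`R`-module. Then `M` is `I`-torsion (`Γ_I(M) = M`) if and only if `D_I(M) = 0`; and `M` is
`I`-torsionfree (`Γ_I(M) = 0`) if and only if the canonical map `M → D_I(M)` is an
isomorphism. Here `Γ_I(M) = {m ∈ M : I^k m = 0 for some k ≥ 1}` and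
`D_I(M) = colim_k Hom_R(I^k, M)`, with `M → D_I(M)` induced by restriction of
`Hom_R(R, M) ≅ M`.
-/

universe u

open Module

open Module

/-- The `I`-torsion submodule `Γ_I(M) = {m ∈ M : I^k m = 0 for some k ≥ 1}`. -/
noncomputable def torsionGamma (R : Type u) [CommRing R] (I : Ideal R) (M : Type u)
    [AddCommGroup M] [Module R M] : Submodule R M :=
  ⨆ k : ℕ, Submodule.torsionBySet R M ((I ^ (k + 1) : Ideal R) : Set R)

/-- The restriction map `M → Hom_R(J, M)`, sending `m` to the restriction of `x ↦ x • m`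
to the ideal `J ⊆ R`. -/
noncomputable def restrictionMap (R : Type u) [CommRing R] (M : Type u) [AddCommGroup M]
    [Module R M] (J : Ideal R) : M →ₗ[R] (J →ₗ[R] M) :=
  (LinearMap.domRestrict' J).comp (LinearMap.lsmul R M).flip

/-- The directed system `k ↦ Hom_R(I^(k+1), M)` with the restriction maps induced by
the inclusions `I^(l+1) ⊆ I^(k+1)` for `k ≤ l`. -/
noncomputable def homPowDiagram (R : Type u) [CommRing R] (I : Ideal R) (M : Type u)
    [AddCommGroup M] [Module R M] :
    ∀ k l : ℕ, k ≤ l → (↥(I ^ (k + 1)) →ₗ[R] M) →ₗ[R] (↥(I ^ (l + 1)) →ₗ[R] M) :=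
  fun _ _ h =>
    LinearMap.lcomp R M (Submodule.inclusion (Ideal.pow_le_pow_right (by omega)))

/-- The ideal transform `D_I(M) = colim_{k ≥ 1} Hom_R(I^k, M)`. -/
noncomputable abbrev idealTransform (R : Type u) [CommRing R] (I : Ideal R) (M : Type u)
    [AddCommGroup M] [Module R M] : Type u :=
  Module.DirectLimit (fun k : ℕ => ↥(I ^ (k + 1)) →ₗ[R] M) (homPowDiagram R I M)

/-- The canonical map `M → D_I(M)` induced by the restrictions of `Hom_R(R, M) ≅ M` to the
ideals `I^k`. -/
noncomputable def toTransform (R : Type u) [CommRing R] (I : Ideal R) (M : Type u)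
    [AddCommGroup M] [Module R M] : M →ₗ[R] idealTransform R I M :=
  (Module.DirectLimit.of R ℕ (fun k : ℕ => ↥(I ^ (k + 1)) →ₗ[R] M)
    (homPowDiagram R I M) 0).comp (restrictionMap R M (I ^ (0 + 1)))


section Aux

variable (R : Type u) [CommRing R] (I : Ideal R) (M : Type u) [AddCommGroup M] [Module R M]

lemma restrictionMap_apply (J : Ideal R) (m : M) (x : J) :
    restrictionMap R M J m x = (x : R) • m := rfl

lemma homPowDiagram_apply (k l : ℕ) (h : k ≤ l) (f : ↥(I ^ (k + 1)) →ₗ[R] M)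
    (x : ↥(I ^ (l + 1))) :
    homPowDiagram R I M k l h f x = f ⟨x, Ideal.pow_le_pow_right (by omega) x.2⟩ := rfl

instance : DirectedSystem (fun k : ℕ => ↥(I ^ (k + 1)) →ₗ[R] M)
    (fun i j h => ⇑(homPowDiagram R I M i j h)) where
  map_self _ f := LinearMap.ext fun x => rfl
  map_map _ _ _ _ _ f := LinearMap.ext fun x => rfl

lemma mem_torsionGamma_iff (m : M) :
    m ∈ torsionGamma R I M ↔ ∃ k : ℕ, ∀ x : ↥(I ^ (k + 1)), (x : R) • m = 0 := by
  have hmono : Monotone (fun k : ℕ =>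
      Submodule.torsionBySet R M ((I ^ (k + 1) : Ideal R) : Set R)) := by
    intro k l hkl
    exact Submodule.torsionBySet_le_torsionBySet_of_subset
      (Ideal.pow_le_pow_right (by omega))
  rw [torsionGamma, Submodule.mem_iSup_of_directed _ hmono.directed_le]
  simp only [Submodule.mem_torsionBySet_iff]
  rfl

lemma restr_surjective (hinj : Module.Injective R M) (k : ℕ) :
    Function.Surjective (restrictionMap R M (I ^ (k + 1))) := by
  intro f
  obtain ⟨h, hh⟩ := hinj.out (X := ↥(I ^ (k + 1))) (Y := R)
    (Submodule.subtype _) Subtype.val_injective f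
  refine ⟨h 1, ?_⟩
  ext x
  rw [restrictionMap_apply, ← map_smul, smul_eq_mul, mul_one]
  exact hh x

lemma of_restr (k : ℕ) (m : M) :
    Module.DirectLimit.of R ℕ (fun k : ℕ => ↥(I ^ (k + 1)) →ₗ[R] M)
      (homPowDiagram R I M) k (restrictionMap R M (I ^ (k + 1)) m) = toTransform R I M m := by
  have : homPowDiagram R I M 0 k (Nat.zero_le k) (restrictionMap R M (I ^ (0 + 1)) m)
      = restrictionMap R M (I ^ (k + 1)) m := by
    ext x; rfl
  rw [toTransform, LinearMap.comp_apply, ← this, Module.DirectLimit.of_f]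

lemma toTransform_surjective (hinj : Module.Injective R M) :
    Function.Surjective (toTransform R I M) := by
  intro z
  obtain ⟨k, f, hf⟩ := Module.DirectLimit.exists_of z
  obtain ⟨m, hm⟩ := restr_surjective R I M hinj k f
  exact ⟨m, by rw [← of_restr, hm, hf]⟩

lemma toTransform_eq_zero_iff (m : M) :
    toTransform R I M m = 0 ↔ m ∈ torsionGamma R I M := by
  rw [mem_torsionGamma_iff]
  constructor
  · intro h
    rw [toTransform, LinearMap.comp_apply] at h
    obtain ⟨j, hj, hzero⟩ := Module.DirectLimit.of.zero_exact h
    refine ⟨j, fun x => ?_⟩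
    have := congrFun (congrArg (DFunLike.coe) hzero) x
    simpa [homPowDiagram_apply, restrictionMap_apply] using this
  · rintro ⟨k, hk⟩
    rw [← of_restr R I M k m]
    have : restrictionMap R M (I ^ (k + 1)) m = 0 := by
      ext x; simpa [restrictionMap_apply] using hk x
    rw [this, map_zero]

end Aux


theorem stmt6 (R : Type u) [CommRing R] (I : Ideal R) (M : Type u) [AddCommGroup M]
    [Module R M] (hinj : Module.Injective R M) :
    (torsionGamma R I M = ⊤ ↔ Subsingleton (idealTransform R I M)) ∧
      (torsionGamma R I M = ⊥ ↔ Function.Bijective (toTransform R I M)) := by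
  have hsurj := toTransform_surjective R I M hinj
  constructor
  · constructor
    · intro htop
      refine subsingleton_of_forall_eq 0 fun z => ?_
      obtain ⟨m, rfl⟩ := hsurj z
      rw [toTransform_eq_zero_iff, htop]; trivial
    · intro hsub
      rw [eq_top_iff]
      intro m _
      rw [← toTransform_eq_zero_iff]
      exact Subsingleton.elim _ _
  · constructor
    · intro hbot
      refine ⟨?_, hsurj⟩
      rw [← LinearMap.ker_eq_bot, eq_bot_iff]
      intro m hm
      have := (toTransform_eq_zero_iff R I M m).1 hm
      rw [hbot] at this
      exact this
    · intro hbij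
      rw [eq_bot_iff]
      intro m hm
      have : toTransform R I M m = 0 := (toTransform_eq_zero_iff R I M m).2 hm
      have := hbij.1 (by rw [this, map_zero] : toTransform R I M m = toTransform R I M 0)
      simpa using this
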